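/- Let X = U_1 + Σ v_a V_a + Σ t_a T_a be a unit spacelike vector (with u_1 = 1, u_a = 0 for a > 1). Then with respect to the basis ordering {U_a, T_a, V_a}, the Jacobi operator acts by J(X)U_a = Σ_b C_{ab}V_b - Σ_b R²_{a11b}T_b, J(X)T_a = Σ_b R²_{a11b}V_b, J(X)V_a = 0, for a suitable symmetric matrix C_{ab} depending on X; in particular J(X)³ = 0. -/

import Mathlib

open scoped BigOperators

/-- Basis of `ℝ^{3s}`: `(0, a) = U_a`, `(1, a) = V_a`, `(2, a) = T_a`. -/
abbrev BasisIdx (s : ℕ) := Fin 3 × Fin s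

/-- The basis vectors `U_a`, `V_a`, `T_a` of `ℝ^{3s}`. -/
def Uvec {s : ℕ} (a : Fin s) : BasisIdx s → ℝ := Pi.single ((0 : Fin 3), a) 1
def Vvec {s : ℕ} (a : Fin s) : BasisIdx s → ℝ := Pi.single ((1 : Fin 3), a) 1
def Tvec {s : ℕ} (a : Fin s) : BasisIdx s → ℝ := Pi.single ((2 : Fin 3), a) 1

/-- Components of the metric of Lemma 2.1: `g(U_a,U_b) = g_{ab}`,
`g(U_a,V_b) = g(V_b,U_a) = δ_{ab}`, `g(T_a,T_b) = -δ_{ab}`, all else zero. -/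
def Gmat {s : ℕ} (gm : Fin s → Fin s → ℝ) : BasisIdx s → BasisIdx s → ℝ :=
  fun x y =>
    if x.1 = 0 ∧ y.1 = 0 then gm x.2 y.2
    else if (x.1 = 0 ∧ y.1 = 1) ∨ (x.1 = 1 ∧ y.1 = 0) then (if x.2 = y.2 then 1 else 0)
    else if x.1 = 2 ∧ y.1 = 2 then (if x.2 = y.2 then (-1 : ℝ) else 0)
    else 0

/-- The bilinear form determined by the metric components. -/
def gBil {s : ℕ} (gm : Fin s → Fin s → ℝ) (X Y : BasisIdx s → ℝ) : ℝ :=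
  ∑ p, ∑ q, X p * Gmat gm p q * Y q

/-- The quadrilinear extension of a component tensor to vectors. -/
def ext {s : ℕ} (F : BasisIdx s → BasisIdx s → BasisIdx s → BasisIdx s → ℝ)
    (x y z w : BasisIdx s → ℝ) : ℝ :=
  ∑ p, ∑ q, ∑ r, ∑ t, x p * y q * z r * w t * F p q r t

/-- A (component-level) algebraic curvature tensor. -/
def IsACT {ι : Type*} (F : ι → ι → ι → ι → ℝ) : Prop :=
  (∀ x y z w, F x y z w = - F y x z w) ∧
  (∀ x y z w, F x y z w = F z w x y) ∧
  (∀ x y z w, F x y z w + F y z x w + F z x y w = 0)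

/-- `R²_{abcd} = δ_{ad}δ_{bc} - δ_{ac}δ_{bd}`, constant sectional curvature `+1`. -/
def R2const (s : ℕ) : Fin s → Fin s → Fin s → Fin s → ℝ :=
  fun a b c d =>
    (if a = d then (1 : ℝ) else 0) * (if b = c then (1 : ℝ) else 0) -
      (if a = c then (1 : ℝ) else 0) * (if b = d then (1 : ℝ) else 0)

/-- The tensor of Lemma 2.1: `R(U_a,U_b,U_c,U_d) = R¹_{abcd}`, components with
exactly one `T` index equal `R²_{abcd}` (replacing the `T` index by the
corresponding `U` index), all else zero. -/
def bigR {s : ℕ} (R1 R2 : Fin s → Fin s → Fin s → Fin s → ℝ) :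
    BasisIdx s → BasisIdx s → BasisIdx s → BasisIdx s → ℝ :=
  fun x y z w =>
    if x.1 = 0 ∧ y.1 = 0 ∧ z.1 = 0 ∧ w.1 = 0 then R1 x.2 y.2 z.2 w.2
    else if (x.1 = 2 ∧ y.1 = 0 ∧ z.1 = 0 ∧ w.1 = 0) ∨ (x.1 = 0 ∧ y.1 = 2 ∧ z.1 = 0 ∧ w.1 = 0) ∨
            (x.1 = 0 ∧ y.1 = 0 ∧ z.1 = 2 ∧ w.1 = 0) ∨ (x.1 = 0 ∧ y.1 = 0 ∧ z.1 = 0 ∧ w.1 = 2)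
      then R2 x.2 y.2 z.2 w.2
    else 0

/-!
`J(X)` is read off by lowering an index with `g`: the pairings of `J(X) y` with `V_b`, `T_b` and
`U_b` determine, in this order, its `U`-, `T`- and `V`-components. The tensor `R` vanishes as
soon as one index is a `V` or two indices are `T`s, and the `U`-part of `X` is `U_1`; so the only
surviving contractions are `R(U_a, X, X, U_b) = C_{ab}` and
`R(T_a, X, X, U_b) = R(U_a, X, X, T_b) = R²_{a11b}`. Hence `J(X)` maps `U` into `V ⊕ T`, `T` into
`V` and kills `V`, which forces `J(X)³ = 0`. The symmetry of `C` comes from the identity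
`R(x, y, z, w) = R(w, z, y, x)` of algebraic curvature tensors.
-/
variable {s : ℕ}

lemma Uvec_apply (a : Fin s) (j : Fin 3) (b : Fin s) :
    Uvec a (j, b) = if j = 0 ∧ b = a then 1 else 0 := by
  simp [Uvec, Pi.single_apply, Prod.ext_iff, and_comm]

lemma sum_smul_Vvec_apply (f : Fin s → ℝ) (j : Fin 3) (b : Fin s) :
    (∑ c, f c • Vvec c) (j, b) = if j = 1 then f b else 0 := by
  simp [Vvec, Finset.sum_apply, Pi.single_apply, Prod.ext_iff, ite_and]

lemma sum_smul_Tvec_apply (f : Fin s → ℝ) (j : Fin 3) (b : Fin s) :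
    (∑ c, f c • Tvec c) (j, b) = if j = 2 then f b else 0 := by
  simp [Tvec, Finset.sum_apply, Pi.single_apply, Prod.ext_iff, ite_and]

section Metric

variable (gm : Fin s → Fin s → ℝ)

lemma gBil_single_right (w : BasisIdx s → ℝ) (c : BasisIdx s) :
    gBil gm w (Pi.single c 1) = ∑ p, w p * Gmat gm p c := by
  simp [gBil, Pi.single_apply]

lemma gBil_Uvec (w : BasisIdx s → ℝ) (b : Fin s) :
    gBil gm w (Uvec b) = ∑ a, w (0, a) * gm a b + w (1, b) := by
  simp [Uvec, gBil_single_right, Fintype.sum_prod_type, Fin.sum_univ_three, Gmat]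

lemma gBil_Vvec (w : BasisIdx s → ℝ) (b : Fin s) : gBil gm w (Vvec b) = w (0, b) := by
  simp [Vvec, gBil_single_right, Fintype.sum_prod_type, Gmat]

lemma gBil_Tvec (w : BasisIdx s → ℝ) (b : Fin s) : gBil gm w (Tvec b) = - w (2, b) := by
  simp [Tvec, gBil_single_right, Fintype.sum_prod_type, Gmat]

lemma eq_of_gBil_basis_eq {w w' : BasisIdx s → ℝ}
    (hU : ∀ b, gBil gm w (Uvec b) = gBil gm w' (Uvec b))
    (hV : ∀ b, gBil gm w (Vvec b) = gBil gm w' (Vvec b))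
    (hT : ∀ b, gBil gm w (Tvec b) = gBil gm w' (Tvec b)) : w = w' := by
  have h0 : ∀ b, w (0, b) = w' (0, b) := fun b => by simpa only [gBil_Vvec] using hV b
  have h2 : ∀ b, w (2, b) = w' (2, b) := fun b => by simpa only [gBil_Tvec, neg_inj] using hT b
  have h1 : ∀ b, w (1, b) = w' (1, b) := fun b => by
    simpa only [gBil_Uvec, h0, add_right_inj] using hU b
  ext ⟨j, b⟩
  fin_cases j
  exacts [h0 b, h1 b, h2 b]

end Metric

lemma ext_single_single (F : BasisIdx s → BasisIdx s → BasisIdx s → BasisIdx s → ℝ)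
    (X : BasisIdx s → ℝ) (p c : BasisIdx s) :
    ext F (Pi.single p 1) X X (Pi.single c 1) = ∑ q, ∑ r, X q * X r * F p q r c := by
  simp [ext, Pi.single_apply]

def adaptedVec (i1 : Fin s) (v t : Fin s → ℝ) : BasisIdx s → ℝ :=
  Uvec i1 + (∑ a, v a • Vvec a) + (∑ a, t a • Tvec a)

section adaptedVec
variable (i1 : Fin s) (v t : Fin s → ℝ) (b : Fin s)

@[simp] lemma adaptedVec_apply_zero : adaptedVec i1 v t (0, b) = if b = i1 then 1 else 0 := by
  simp only [adaptedVec, Pi.add_apply, Uvec_apply, sum_smul_Vvec_apply, sum_smul_Tvec_apply]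
  simp

@[simp] lemma adaptedVec_apply_one : adaptedVec i1 v t (1, b) = v b := by
  simp only [adaptedVec, Pi.add_apply, Uvec_apply, sum_smul_Vvec_apply, sum_smul_Tvec_apply]
  simp

@[simp] lemma adaptedVec_apply_two : adaptedVec i1 v t (2, b) = t b := by
  simp only [adaptedVec, Pi.add_apply, Uvec_apply, sum_smul_Vvec_apply, sum_smul_Tvec_apply]
  simp

end adaptedVec

lemma ext_bigR_Vvec_left (R1 R2 : Fin s → Fin s → Fin s → Fin s → ℝ) (X z : BasisIdx s → ℝ)
    (a : Fin s) : ext (bigR R1 R2) (Vvec a) X X z = 0 := by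
  rw [Vvec, ext]
  refine Finset.sum_eq_zero fun p _ => ?_
  rcases eq_or_ne p (1, a) with rfl | hp
  · simp [bigR]
  · simp [hp]

theorem IsACT.apply_reverse {ι : Type*} {F : ι → ι → ι → ι → ℝ} (h : IsACT F) (x y z w : ι) :
    F x y z w = F w z y x := by
  rw [h.2.1 x y z w, h.1 z w x y, h.2.1 w z x y, h.1 x y w z, h.2.1 y x w z, neg_neg]

def jacobiCoeff (R1 R2 : Fin s → Fin s → Fin s → Fin s → ℝ) (i1 : Fin s) (t : Fin s → ℝ)
    (a b : Fin s) : ℝ :=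
  R1 a i1 i1 b + ∑ c, t c * (R2 a c i1 b + R2 a i1 c b)

lemma jacobiCoeff_symm {R1 R2 : Fin s → Fin s → Fin s → Fin s → ℝ} (h1 : IsACT R1) (h2 : IsACT R2)
    (i1 : Fin s) (t : Fin s → ℝ) (a b : Fin s) :
    jacobiCoeff R1 R2 i1 t a b = jacobiCoeff R1 R2 i1 t b a := by
  rw [jacobiCoeff, jacobiCoeff, h1.apply_reverse a]
  congr 1
  refine Finset.sum_congr rfl fun c _ => ?_
  rw [h2.apply_reverse a c, h2.apply_reverse a i1, add_comm]

section Jacobi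

variable {gm : Fin s → Fin s → ℝ} {F : BasisIdx s → BasisIdx s → BasisIdx s → BasisIdx s → ℝ}
  {X : BasisIdx s → ℝ} {J : Module.End ℝ (BasisIdx s → ℝ)}

lemma jacobi_eq_of_pairings (hJ : ∀ y z, gBil gm (J y) z = ext F y X X z)
    {y w : BasisIdx s → ℝ} (hU : ∀ b, ext F y X X (Uvec b) = ∑ a, w (0, a) * gm a b + w (1, b))
    (hV : ∀ b, ext F y X X (Vvec b) = w (0, b)) (hT : ∀ b, ext F y X X (Tvec b) = - w (2, b)) :
    J y = w :=
  eq_of_gBil_basis_eq gm (fun b => by rw [hJ, hU, gBil_Uvec]) (fun b => by rw [hJ, hV, gBil_Vvec])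
    (fun b => by rw [hJ, hT, gBil_Tvec])

variable {R1 R2 : Fin s → Fin s → Fin s → Fin s → ℝ}

lemma jacobi_Vvec (hJ : ∀ y z, gBil gm (J y) z = ext (bigR R1 R2) y X X z) (a : Fin s) :
    J (Vvec a) = 0 :=
  jacobi_eq_of_pairings hJ (by simp [ext_bigR_Vvec_left]) (by simp [ext_bigR_Vvec_left])
    (by simp [ext_bigR_Vvec_left])

variable {i1 : Fin s} {v t : Fin s → ℝ}

lemma jacobi_Tvec
    (hJ : ∀ y z, gBil gm (J y) z = ext (bigR R1 R2) y (adaptedVec i1 v t) (adaptedVec i1 v t) z)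
    (a : Fin s) : J (Tvec a) = ∑ b, R2 a i1 i1 b • Vvec b := by
  apply jacobi_eq_of_pairings hJ <;> intro b <;>
    simp only [sum_smul_Vvec_apply] <;>
    simp [Tvec, Uvec, Vvec, ext_single_single, Fintype.sum_prod_type, Fin.sum_univ_three, bigR]

lemma jacobi_Uvec
    (hJ : ∀ y z, gBil gm (J y) z = ext (bigR R1 R2) y (adaptedVec i1 v t) (adaptedVec i1 v t) z)
    (a : Fin s) :
    J (Uvec a) = ∑ b, jacobiCoeff R1 R2 i1 t a b • Vvec b - ∑ b, R2 a i1 i1 b • Tvec b := by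
  apply jacobi_eq_of_pairings hJ <;> intro b <;>
    simp only [Pi.sub_apply, sum_smul_Vvec_apply, sum_smul_Tvec_apply] <;>
    simp [Tvec, Uvec, Vvec, ext_single_single, Fintype.sum_prod_type, Fin.sum_univ_three, bigR,
      jacobiCoeff, Finset.sum_add_distrib, mul_add, add_assoc]

end Jacobi

lemma pow_three_eq_zero_of_shift (J : Module.End ℝ (BasisIdx s → ℝ)) {A B C : Fin s → Fin s → ℝ}
    (hU : ∀ a, J (Uvec a) = ∑ b, A a b • Vvec b - ∑ b, B a b • Tvec b)
    (hT : ∀ a, J (Tvec a) = ∑ b, C a b • Vvec b) (hV : ∀ a, J (Vvec a) = 0) : J ^ 3 = 0 := by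
  refine (Pi.basisFun ℝ (BasisIdx s)).ext fun ⟨j, a⟩ => ?_
  simp only [Pi.basisFun_apply, LinearMap.zero_apply, pow_succ, pow_zero, one_mul,
    Module.End.mul_apply]
  fin_cases j
  · change J (J (J (Uvec a))) = 0
    simp [hU, hT, hV]
  · change J (J (J (Vvec a))) = 0
    simp [hV]
  · change J (J (J (Tvec a))) = 0
    simp [hT, hV]

theorem stmt8_general (s : ℕ) (i1 : Fin s)
    (gm : Fin s → Fin s → ℝ)
    (R1 R2 : Fin s → Fin s → Fin s → Fin s → ℝ)
    (h1 : IsACT R1) (h2 : IsACT R2)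
    (v t : Fin s → ℝ) (X : BasisIdx s → ℝ)
    (hXdef : X = Uvec i1 + (∑ a, v a • Vvec a) + (∑ a, t a • Tvec a))
    (J : Module.End ℝ (BasisIdx s → ℝ))
    (hJ : ∀ y z, gBil gm (J y) z = ext (bigR R1 R2) y X X z) :
    ∃ C : Fin s → Fin s → ℝ, (∀ a b, C a b = C b a) ∧
      (∀ a, J (Uvec a) = (∑ b, C a b • Vvec b) - ∑ b, R2 a i1 i1 b • Tvec b) ∧
      (∀ a, J (Tvec a) = ∑ b, R2 a i1 i1 b • Vvec b) ∧
      (∀ a, J (Vvec a) = 0) ∧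
      J ^ 3 = 0 := by
  obtain rfl : X = adaptedVec i1 v t := hXdef
  exact ⟨jacobiCoeff R1 R2 i1 t, jacobiCoeff_symm h1 h2 i1 t, jacobi_Uvec hJ, jacobi_Tvec hJ,
    jacobi_Vvec hJ, pow_three_eq_zero_of_shift J (jacobi_Uvec hJ) (jacobi_Tvec hJ) (jacobi_Vvec hJ)⟩

/-- for a unit spacelike vector `X = U_1 + Σ v_a V_a + Σ t_a T_a`
(so `u_1 = 1`, `u_a = 0` for `a > 1`), the Jacobi operator of the tensor
`R(R¹,R²)` of Lemma 2.1 acts by `J(X)U_a = Σ_b C_{ab} V_b - Σ_b R²_{a11b} T_b`,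
`J(X)T_a = Σ_b R²_{a11b} V_b`, `J(X)V_a = 0` for a suitable symmetric matrix
`C` depending on `X`; in particular `J(X)³ = 0`.
Here `i1` denotes the first index (`1` in the paper's numbering). -/
theorem stmt8 (s : ℕ) (hs : 2 ≤ s) (i1 : Fin s) (hi1 : (i1 : ℕ) = 0)
    (gm : Fin s → Fin s → ℝ) (hgm : ∀ a b, gm a b = gm b a)
    (R1 R2 : Fin s → Fin s → Fin s → Fin s → ℝ)
    (h1 : IsACT R1) (h2 : IsACT R2)
    (v t : Fin s → ℝ) (X : BasisIdx s → ℝ)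
    (hXdef : X = Uvec i1 + (∑ a, v a • Vvec a) + (∑ a, t a • Tvec a))
    (hX : gBil gm X X = 1)
    (J : Module.End ℝ (BasisIdx s → ℝ))
    (hJ : ∀ y z, gBil gm (J y) z = ext (bigR R1 R2) y X X z) :
    ∃ C : Fin s → Fin s → ℝ, (∀ a b, C a b = C b a) ∧
      (∀ a, J (Uvec a) = (∑ b, C a b • Vvec b) - ∑ b, R2 a i1 i1 b • Tvec b) ∧
      (∀ a, J (Tvec a) = ∑ b, R2 a i1 i1 b • Vvec b) ∧
      (∀ a, J (Vvec a) = 0) ∧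
      J ^ 3 = 0 :=
  stmt8_general s i1 gm R1 R2 h1 h2 v t X hXdef J hJ
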